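/- arXiv:1304.6721 — 3 statements merged into one kernel-verified Lean document; each statement's English description precedes it below -/
import Mathlib

section
/- Fix n ≥ 1. Let M ∈ SL(2,ℂ), let a ∈ ℂ² be a nonzero eigenvector with M a = λ a for some λ ∈ ℂ*, and let b₀, …, b_{n−1} be nonzero vectors in ℂ². Extend the sequence to all integer indices by b_{i+n} = M bᵢ. Assume ⟨a∧bᵢ⟩ ≠ 0 and ⟨bᵢ∧b_{i+1}⟩ ≠ 0 for all i, where ⟨x∧y⟩ = x₁y₂ − x₂y₁. Define xᵢ = ⟨a∧b_{i−1}⟩⟨b_{i+1}∧bᵢ⟩ / (⟨a∧b_{i+1}⟩⟨b_{i−1}∧bᵢ⟩). Then ∏_{i=0}^{n−1} (−xᵢ) = λ². -/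
/-- The standard area form ⟨x∧y⟩ = x₁y₂ − x₂y₁ on ℂ² = (Fin 2 → ℂ). -/
def wedge2 (x y : Fin 2 → ℂ) : ℂ := x 0 * y 1 - x 1 * y 0

/-!
Put `A i = ⟨a∧bᵢ⟩`, `B i = ⟨bᵢ∧bᵢ₊₁⟩` and `r i = B (i - 1) / (A (i - 1) * A i)` (`frameRatio`).
Then `-xᵢ = r (i + 1) / r i`, so the product telescopes to `r n / r 0`. Since `M` preserves the
area form and `⟨a∧Mv⟩ = ⟨M⁻¹a∧v⟩ = λ⁻¹⟨a∧v⟩`, the monodromy `b (i + n) = M bᵢ` gives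
`r (i + n) = λ² r i`.
-/

open Finset Matrix

lemma prod_range_div_of_ne_zero {G : Type*} [CommGroupWithZero G] (f : ℕ → G) (n : ℕ)
    (hf : ∀ i ≤ n, f i ≠ 0) : ∏ i ∈ range n, f (i + 1) / f i = f n / f 0 := by
  induction n with
  | zero => simp [hf 0 le_rfl]
  | succ n ih =>
    rw [prod_range_succ, ih fun i hi => hf i (by omega), mul_comm,
      div_mul_div_cancel₀ (hf n (by omega))]

lemma wedge2_comm (u v : Fin 2 → ℂ) : wedge2 u v = -wedge2 v u := by
  simp only [wedge2]; ring

lemma wedge2_smul_left (c : ℂ) (u v : Fin 2 → ℂ) : wedge2 (c • u) v = c * wedge2 u v := by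
  simp only [wedge2, Pi.smul_apply, smul_eq_mul]; ring

lemma wedge2_mulVec_mulVec (M : Matrix (Fin 2) (Fin 2) ℂ) (u v : Fin 2 → ℂ) :
    wedge2 (M *ᵥ u) (M *ᵥ v) = M.det * wedge2 u v := by
  simp only [wedge2, det_fin_two, mulVec, dotProduct, Fin.sum_univ_two]; ring

lemma wedge2_mulVec_right_of_eigenvector {M : Matrix (Fin 2) (Fin 2) ℂ} (hM : M.det = 1)
    {a : Fin 2 → ℂ} {lam : ℂ} (hlam : lam ≠ 0) (heig : M *ᵥ a = lam • a) (v : Fin 2 → ℂ) :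
    wedge2 a (M *ᵥ v) = lam⁻¹ * wedge2 a v := by
  have h : lam * wedge2 a (M *ᵥ v) = wedge2 a v := by
    rw [← wedge2_smul_left, ← heig, wedge2_mulVec_mulVec, hM, one_mul]
  rw [← h, inv_mul_cancel_left₀ hlam]

noncomputable def frameRatio (a : Fin 2 → ℂ) (b : ℤ → Fin 2 → ℂ) (i : ℤ) : ℂ :=
  wedge2 (b (i - 1)) (b i) / (wedge2 a (b (i - 1)) * wedge2 a (b i))

lemma neg_crossRatio_eq_frameRatio_div (a : Fin 2 → ℂ) (b : ℤ → Fin 2 → ℂ) (i : ℤ)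
    (hi : wedge2 a (b i) ≠ 0) :
    -(wedge2 a (b (i - 1)) * wedge2 (b (i + 1)) (b i) /
        (wedge2 a (b (i + 1)) * wedge2 (b (i - 1)) (b i))) =
      frameRatio a b (i + 1) / frameRatio a b i := by
  simp only [frameRatio, add_sub_cancel_right, wedge2_comm (b (i + 1))]
  field_simp

lemma frameRatio_add_period {n : ℤ} {M : Matrix (Fin 2) (Fin 2) ℂ} (hM : M.det = 1)
    {a : Fin 2 → ℂ} {lam : ℂ} (hlam : lam ≠ 0) (heig : M *ᵥ a = lam • a)
    {b : ℤ → Fin 2 → ℂ} (hper : ∀ i, b (i + n) = M *ᵥ b i) (i : ℤ) :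
    frameRatio a b (i + n) = lam ^ 2 * frameRatio a b i := by
  simp only [frameRatio, ← sub_add_eq_add_sub, hper, wedge2_mulVec_mulVec, hM, one_mul,
    wedge2_mulVec_right_of_eigenvector hM hlam heig]
  field_simp

lemma frameRatio_ne_zero {a : Fin 2 → ℂ} {b : ℤ → Fin 2 → ℂ} (hab : ∀ i, wedge2 a (b i) ≠ 0)
    (hbb : ∀ i, wedge2 (b i) (b (i + 1)) ≠ 0) (i : ℤ) : frameRatio a b i ≠ 0 := by
  have hb := hbb (i - 1)
  rw [sub_add_cancel] at hb
  exact div_ne_zero hb (mul_ne_zero (hab _) (hab _))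

theorem stmt_3_general (n : ℕ)
    (M : Matrix (Fin 2) (Fin 2) ℂ) (hM : M.det = 1)
    (a : Fin 2 → ℂ) (lam : ℂ) (hlam : lam ≠ 0)
    (heig : M.mulVec a = lam • a)
    (b : ℤ → (Fin 2 → ℂ))
    (hper : ∀ i : ℤ, b (i + n) = M.mulVec (b i))
    (hab : ∀ i, wedge2 a (b i) ≠ 0) (hbb : ∀ i, wedge2 (b i) (b (i + 1)) ≠ 0)
    (x : ℤ → ℂ)
    (hx : ∀ i, x i = wedge2 a (b (i - 1)) * wedge2 (b (i + 1)) (b i) /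
        (wedge2 a (b (i + 1)) * wedge2 (b (i - 1)) (b i))) :
    ∏ i ∈ Finset.range n, (-(x i)) = lam ^ 2 := by
  have hr := frameRatio_ne_zero hab hbb
  calc ∏ i ∈ range n, -x i
      = ∏ i ∈ range n, frameRatio a b ((i + 1 : ℕ) : ℤ) / frameRatio a b (i : ℕ) := by
        refine prod_congr rfl fun i _ => ?_
        rw [hx, neg_crossRatio_eq_frameRatio_div a b i (hab i), Nat.cast_succ]
    _ = frameRatio a b n / frameRatio a b 0 :=
        prod_range_div_of_ne_zero (fun i : ℕ => frameRatio a b i) n fun i _ => hr i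
    _ = lam ^ 2 := by
        rw [← zero_add (n : ℤ), frameRatio_add_period hM hlam heig hper,
          mul_div_cancel_right₀ _ (hr 0)]

theorem stmt_3 (n : ℕ) (hn : 1 ≤ n)
    (M : Matrix (Fin 2) (Fin 2) ℂ) (hM : M.det = 1)
    (a : Fin 2 → ℂ) (ha : a ≠ 0) (lam : ℂ) (hlam : lam ≠ 0)
    (heig : M.mulVec a = lam • a)
    (b : ℤ → (Fin 2 → ℂ)) (hb : ∀ i, b i ≠ 0)
    (hper : ∀ i : ℤ, b (i + n) = M.mulVec (b i))
    (hab : ∀ i, wedge2 a (b i) ≠ 0) (hbb : ∀ i, wedge2 (b i) (b (i + 1)) ≠ 0)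
    (x : ℤ → ℂ)
    (hx : ∀ i, x i = wedge2 a (b (i - 1)) * wedge2 (b (i + 1)) (b i) /
        (wedge2 a (b (i + 1)) * wedge2 (b (i - 1)) (b i))) :
    ∏ i ∈ Finset.range n, (-(x i)) = lam ^ 2 :=
  stmt_3_general n M hM a lam hlam heig b hper hab hbb x hx
end

section
/- Let λ, x_e ∈ ℂ* and define z = λ/x_e and w = 1/(λ x_e); assume z ≠ 0,1 and w ≠ 0,1. Set z'' = 1 − 1/z, w'' = 1 − 1/w, and x_d = z''·w''. Then λ + λ⁻¹ = x_e + x_e⁻¹ − x_d/x_e. -/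
theorem stmt_8_general (lam xe : ℂ) (hlam : lam ≠ 0) (hxe : xe ≠ 0)
    (z w : ℂ) (hz : z = lam / xe) (hw : w = 1 / (lam * xe))
    (z'' w'' xd : ℂ)
    (hz'' : z'' = 1 - 1 / z) (hw'' : w'' = 1 - 1 / w)
    (hxd : xd = z'' * w'') :
    lam + lam⁻¹ = xe + xe⁻¹ - xd / xe := by
  have hxd_eq : xd = (1 - xe / lam) * (1 - lam * xe) := by
    rw [hxd, hz'', hw'', hz, hw, one_div_div, one_div_one_div]
  rw [hxd_eq]
  field_simp
  ring

theorem stmt_8 (lam xe : ℂ) (hlam : lam ≠ 0) (hxe : xe ≠ 0)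
    (z w : ℂ) (hz : z = lam / xe) (hw : w = 1 / (lam * xe))
    (hz0 : z ≠ 0) (hz1 : z ≠ 1) (hw0 : w ≠ 0) (hw1 : w ≠ 1)
    (z'' w'' xd : ℂ)
    (hz'' : z'' = 1 - 1 / z) (hw'' : w'' = 1 - 1 / w)
    (hxd : xd = z'' * w'') :
    lam + lam⁻¹ = xe + xe⁻¹ - xd / xe :=
  stmt_8_general lam xe hlam hxe z w hz hw z'' w'' xd hz'' hw'' hxd
end

section
/- Let ℏ ∈ ℂ with Re ℏ < 0, Z ∈ ℂ, q = e^ℏ, q̃ = e^{−4π²/ℏ}, Z̃ = (2πi/ℏ)Z, and let Φ_ℏ(Z) = ∏_{r≥0}(1 − q^{r+1/2}e^Z) / ∏_{r≥0}(1 − q̃^{−r−1/2}e^{Z̃}). Then Φ_ℏ satisfies the second (modular dual) functional equation Φ_ℏ(Z + 2πi) = Φ_ℏ(Z) / (1 − q̃^{1/2}e^{Z̃}), provided all denominators are nonzero. -/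
/-- Numerator of the noncompact quantum dilogarithm:
`∏_{r≥0} (1 − q^{r+1/2} e^Z)` with `q = e^ℏ`, i.e. `q^{r+1/2} = e^{(r+1/2)ℏ}`. -/
noncomputable def PhiNum (ℏ Z : ℂ) : ℂ :=
  ∏' r : ℕ, (1 - Complex.exp (((r : ℂ) + 1 / 2) * ℏ) * Complex.exp Z)

/-- Denominator of the noncompact quantum dilogarithm:
`∏_{r≥0} (1 − q̃^{−r−1/2} e^{Z̃})` with `q̃ = e^{−4π²/ℏ}` and `Z̃ = (2πi/ℏ)Z`. -/
noncomputable def PhiDen (ℏ Z : ℂ) : ℂ :=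
  ∏' r : ℕ, (1 - Complex.exp ((-(r : ℂ) - 1 / 2) * (-(4 * (Real.pi : ℂ) ^ 2 / ℏ))) *
    Complex.exp ((2 * (Real.pi : ℂ) * Complex.I / ℏ) * Z))

/-- The noncompact quantum dilogarithm `Φ_ℏ(Z)`. -/
noncomputable def Phi (ℏ Z : ℂ) : ℂ := PhiNum ℏ Z / PhiDen ℏ Z

/-!
The numerator only sees `e^Z`, so it is `2πi`-periodic. In the denominator, with
`t = q̃⁻¹ = e^{4π²/ℏ}` (of modulus `< 1` because `Re ℏ < 0`), the factors are `1 - a tʳ` with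
`a = t^{1/2} e^{Z̃}`, and `Z ↦ Z + 2πi` replaces `a` by `a / t`. Peeling off the first factor of
`∏ (1 - (a/t) tʳ)` leaves `∏ (1 - a tʳ)`, so the denominator gains exactly the factor
`1 - t^{-1/2} e^{Z̃} = 1 - q̃^{1/2} e^{Z̃}`.
-/

open Complex
open scoped Real

section GeometricProduct

variable {R : Type*} [NormedCommRing R] [NormOneClass R] [CompleteSpace R] {t : R}

theorem multipliable_one_sub_mul_pow (ht : ‖t‖ < 1) (a : R) :
    Multipliable fun n : ℕ ↦ 1 - a * t ^ n := by
  have hsum : Summable fun n : ℕ ↦ ‖-(a * t ^ n)‖ :=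
    ((summable_geometric_of_lt_one (norm_nonneg t) ht).mul_left ‖a‖).of_nonneg_of_le
      (fun _ ↦ norm_nonneg _) fun n ↦ by
        rw [norm_neg]
        exact (norm_mul_le _ _).trans (mul_le_mul_of_nonneg_left (norm_pow_le _ _) (norm_nonneg a))
  simpa only [sub_eq_add_neg] using multipliable_one_add_of_summable hsum

theorem tprod_one_sub_mul_pow (ht : ‖t‖ < 1) (a : R) :
    ∏' n : ℕ, (1 - a * t ^ n) = (1 - a) * ∏' n : ℕ, (1 - a * t * t ^ n) := by
  have htail : Multipliable fun n : ℕ ↦ 1 - a * t ^ (n + 1) :=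
    (multipliable_one_sub_mul_pow ht (a * t)).congr fun n ↦ by ring
  rw [tprod_eq_zero_mul' (f := fun n : ℕ ↦ 1 - a * t ^ n) htail, pow_zero, mul_one]
  exact congrArg _ (tprod_congr fun n ↦ by ring)

end GeometricProduct

theorem PhiNum_add_two_pi_I (ℏ Z : ℂ) : PhiNum ℏ (Z + 2 * π * I) = PhiNum ℏ Z := by
  simp only [PhiNum, exp_add, exp_two_pi_mul_I, mul_one]

theorem PhiDen_eq_tprod (ℏ Z : ℂ) :
    PhiDen ℏ Z =
      ∏' r : ℕ, (1 - exp (2 * π ^ 2 / ℏ + 2 * π * I / ℏ * Z) * exp (4 * π ^ 2 / ℏ) ^ r) := by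
  refine tprod_congr fun r ↦ ?_
  rw [← exp_nat_mul, ← exp_add, ← exp_add]
  ring_nf

theorem norm_exp_four_pi_sq_div_lt_one {ℏ : ℂ} (hℏ : ℏ.re < 0) : ‖exp (4 * π ^ 2 / ℏ)‖ < 1 := by
  have hℏ0 : ℏ ≠ 0 := fun h ↦ by simp [h] at hℏ
  have hre : (4 * (π : ℂ) ^ 2 / ℏ).re = 4 * π ^ 2 * ℏ.re / normSq ℏ := by
    rw [show (4 * (π : ℂ) ^ 2) = ((4 * π ^ 2 : ℝ) : ℂ) by push_cast; ring, div_re, ofReal_re,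
      ofReal_im, zero_mul, zero_div, add_zero]
  rw [norm_exp, Real.exp_lt_one_iff, hre]
  exact div_neg_of_neg_of_pos (mul_neg_of_pos_of_neg (by positivity) hℏ) (normSq_pos.mpr hℏ0)

theorem PhiDen_add_two_pi_I {ℏ : ℂ} (hℏ : ℏ.re < 0) (Z : ℂ) :
    PhiDen ℏ (Z + 2 * π * I) =
      (1 - exp (-(2 * π ^ 2 / ℏ)) * exp (2 * π * I / ℏ * Z)) * PhiDen ℏ Z := by
  have hshift : 2 * π ^ 2 / ℏ + 2 * π * I / ℏ * (Z + 2 * π * I) + 4 * π ^ 2 / ℏ =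
      2 * π ^ 2 / ℏ + 2 * π * I / ℏ * Z := by
    linear_combination (4 * (π : ℂ) ^ 2 / ℏ) * I_sq
  rw [PhiDen_eq_tprod, PhiDen_eq_tprod, tprod_one_sub_mul_pow (norm_exp_four_pi_sq_div_lt_one hℏ),
    ← exp_add, hshift, ← exp_add]
  congr 3
  linear_combination (4 * (π : ℂ) ^ 2 / ℏ) * I_sq

theorem stmt_13_general (ℏ Z : ℂ) (hℏ : ℏ.re < 0) :
    Phi ℏ (Z + 2 * (Real.pi : ℂ) * Complex.I) =
      Phi ℏ Z / (1 - Complex.exp (-(2 * (Real.pi : ℂ) ^ 2 / ℏ)) *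
        Complex.exp ((2 * (Real.pi : ℂ) * Complex.I / ℏ) * Z)) := by
  rw [Phi, Phi, PhiNum_add_two_pi_I, PhiDen_add_two_pi_I hℏ, div_div, mul_comm]

theorem stmt_13 (ℏ Z : ℂ) (hℏ : ℏ.re < 0)
    (hd1 : PhiDen ℏ Z ≠ 0)
    (hd2 : PhiDen ℏ (Z + 2 * (Real.pi : ℂ) * Complex.I) ≠ 0)
    (hfac : 1 - Complex.exp (-(2 * (Real.pi : ℂ) ^ 2 / ℏ)) *
      Complex.exp ((2 * (Real.pi : ℂ) * Complex.I / ℏ) * Z) ≠ 0) :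
    Phi ℏ (Z + 2 * (Real.pi : ℂ) * Complex.I) =
      Phi ℏ Z / (1 - Complex.exp (-(2 * (Real.pi : ℂ) ^ 2 / ℏ)) *
        Complex.exp ((2 * (Real.pi : ℂ) * Complex.I / ℏ) * Z)) :=
  stmt_13_general ℏ Z hℏ
end
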